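/- Let L be a finite semi-primary lattice, let μ be a partition, let C ⊆ L_μ be a constant type code with minimum distance D(C) ≥ D, and let r := ⌊(D−1)/2⌋. If φ is a partition with min_{u ∈ L_μ} |S(u,r,φ)| > 0, then |C| ≤ |L_φ| / min_{u ∈ L_μ} |S(u,r,φ)|. -/

import Mathlib

/-- The height of an element: the greatest length of chains from `⊥` to `u`. -/
noncomputable def ht {L : Type*} [Preorder L] (u : L) : ℕ := (Order.height u).toNat

/-- An element `z` is a cycle if the interval `[⊥, z]` is a chain. -/
def IsCycle {L : Type*} [Lattice L] [BoundedOrder L] (z : L) : Prop :=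
  IsChain (· ≤ ·) (Set.Icc (⊥ : L) z)

/-- An element `z` is a dual cycle if the interval `[z, ⊤]` is a chain. -/
def IsDualCycle {L : Type*} [Lattice L] [BoundedOrder L] (z : L) : Prop :=
  IsChain (· ≤ ·) (Set.Icc z (⊤ : L))

/-- A lattice is semi-primary if every element is a join of cycles and a meet of
dual cycles. -/
def IsSemiPrimary (L : Type*) [Lattice L] [BoundedOrder L] : Prop :=
  ∀ u : L, (∃ s : Finset L, (∀ z ∈ s, IsCycle z) ∧ u = s.sup id) ∧
           (∃ s : Finset L, (∀ z ∈ s, IsDualCycle z) ∧ u = s.inf id)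

/-- A finite family of lattice elements is independent. -/
def IndepFun {L : Type*} [Lattice L] [BoundedOrder L] {n : ℕ} (z : Fin n → L) : Prop :=
  ∀ i, ((Finset.univ.erase i).sup z) ⊓ z i = ⊥

/-- A partition is (represented by) a multiset of positive natural numbers. -/
def IsPartition (μ : Multiset ℕ) : Prop := ∀ p ∈ μ, 0 < p

/-- The `i`-th largest part of a partition (0-indexed, 0 if out of range). -/
def partGet (μ : Multiset ℕ) (i : ℕ) : ℕ := ((μ.sort (· ≤ ·)).reverse).getD i 0

/-- Componentwise order on partitions: `μ ≤ λ` iff `μᵢ ≤ λᵢ` for all `i`. -/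
def PartLE (μ lam : Multiset ℕ) : Prop := ∀ i, partGet μ i ≤ partGet lam i

/-- For `λ = (sⁿ)` and `μ ≤ λ`, the partition `λ − μ = (s − μₙ, …, s − μ₁)`. -/
def partSub (s n : ℕ) (μ : Multiset ℕ) : Multiset ℕ :=
  Multiset.filter (fun x => 0 < x)
    (↑((List.range n).map (fun i => s - partGet μ i)) : Multiset ℕ)

/-- `u` has type `μ`: `u` is a join of independent nonzero cycles whose multiset of
heights equals `μ`. -/
def IsTypeOf {L : Type*} [Lattice L] [BoundedOrder L] (u : L) (μ : Multiset ℕ) : Prop :=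
  ∃ (n : ℕ) (z : Fin n → L), (∀ i, IsCycle (z i)) ∧ (∀ i, z i ≠ ⊥) ∧ IndepFun z ∧
    u = Finset.univ.sup z ∧ (↑(List.ofFn (fun i => ht (z i))) : Multiset ℕ) = μ

/-- The lattice metric `d(u,v) = h(u ∨ v) − h(u ∧ v)`. -/
noncomputable def dLat {L : Type*} [Lattice L] (u v : L) : ℕ := ht (u ⊔ v) - ht (u ⊓ v)

/-- The sphere of radius `r` centered at `u`. -/
def sph {L : Type*} [Lattice L] (u : L) (r : ℕ) : Set L := {v | dLat u v ≤ r}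

/-- The `t`-th layer of the sphere of radius `r` centered at `u`. -/
def sphH {L : Type*} [Lattice L] (u : L) (r t : ℕ) : Set L :=
  {v | dLat u v ≤ r ∧ ht v = t}

/-- The elements of type `μ` in the sphere of radius `r` centered at `u`. -/
def sphT {L : Type*} [Lattice L] [BoundedOrder L] (u : L) (r : ℕ) (μ : Multiset ℕ) :
    Set L := {v | dLat u v ≤ r ∧ IsTypeOf v μ}

/-- A finite semi-primary lattice is down-enumerable. -/
def DownEnum (L : Type*) [Lattice L] [BoundedOrder L] : Prop :=
  ∀ (u v : L) (φ μ : Multiset ℕ), IsTypeOf u φ → IsTypeOf v φ →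
    Nat.card {w : L // IsTypeOf w μ ∧ w ≤ u} = Nat.card {w : L // IsTypeOf w μ ∧ w ≤ v}

/-- A finite semi-primary lattice is up-enumerable. -/
def UpEnum (L : Type*) [Lattice L] [BoundedOrder L] : Prop :=
  ∀ (u v : L) (φ μ : Multiset ℕ), IsTypeOf u φ → IsTypeOf v φ →
    Nat.card {w : L // IsTypeOf w μ ∧ u ≤ w} = Nat.card {w : L // IsTypeOf w μ ∧ v ≤ w}

/-- A lattice is enumerable if it is both down- and up-enumerable. -/
def Enumerable (L : Type*) [Lattice L] [BoundedOrder L] : Prop := DownEnum L ∧ UpEnum L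

/-- `α(φ,μ)`: the number of elements of type `μ` below a (any) element of type `φ`. -/
noncomputable def alphaP (L : Type*) [Lattice L] [BoundedOrder L] (φ μ : Multiset ℕ) : ℕ :=
  sSup {n | ∃ u : L, IsTypeOf u φ ∧ n = Nat.card {w : L // IsTypeOf w μ ∧ w ≤ u}}

/-- `β(φ,μ)`: the number of elements of type `μ` above a (any) element of type `φ`. -/
noncomputable def betaP (L : Type*) [Lattice L] [BoundedOrder L] (φ μ : Multiset ℕ) : ℕ :=
  sSup {n | ∃ u : L, IsTypeOf u φ ∧ n = Nat.card {w : L // IsTypeOf w μ ∧ u ≤ w}}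

/-- `α(μ, r₁, …, rₙ)`: the number of chains `x₁ ≤ ⋯ ≤ xₙ ≤ w` with `h(xᵢ) = rᵢ`,
below a (any) element `w` of type `μ`. -/
noncomputable def alphaChain (L : Type*) [Lattice L] [BoundedOrder L] (μ : Multiset ℕ)
    {n : ℕ} (r : Fin n → ℕ) : ℕ :=
  sSup {m | ∃ w : L, IsTypeOf w μ ∧
    m = Nat.card {x : Fin n → L // (∀ i, ht (x i) = r i) ∧ Monotone x ∧ ∀ i, x i ≤ w}}

/-!
In a finite modular lattice a covering step raises the height by exactly one (Jordan–Dedekind),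
and from this `h(a ⊔ b) + h(a ⊓ b) = h(a) + h(b)` follows, which makes `d` a metric. For a code of
minimum distance `D` and `r = ⌊(D-1)/2⌋` the spheres of radius `r` around distinct codewords are
therefore disjoint, so their type-`φ` parts are disjoint subsets of `L_φ`, each of size at least
`min_{u ∈ L_μ} |S(u,r,φ)|`.
-/

lemma Finset.card_mul_le_ncard_of_pairwiseDisjoint {ι α : Type*} [Finite α] {s : Finset ι}
    {S : ι → Set α} {T : Set α} {m : ℕ} (hdisj : (s : Set ι).PairwiseDisjoint S)
    (hST : ∀ i ∈ s, S i ⊆ T) (hm : ∀ i ∈ s, m ≤ (S i).ncard) : s.card * m ≤ T.ncard := by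
  calc s.card * m = ∑ _i ∈ s, m := by rw [Finset.sum_const, smul_eq_mul]
    _ ≤ ∑ i ∈ s, (S i).ncard := Finset.sum_le_sum hm
    _ = (⋃ i ∈ s, S i).ncard := by
      rw [← Finset.set_biUnion_coe,
        s.finite_toSet.ncard_biUnion (fun i _ => (S i).toFinite) hdisj, finsum_mem_coe_finset]
    _ ≤ T.ncard := Set.ncard_le_ncard (Set.iUnion₂_subset hST)

lemma dLat_comm {L : Type*} [Lattice L] (u v : L) : dLat u v = dLat v u := by
  rw [dLat, dLat, sup_comm, inf_comm]

section Height

variable {L : Type*} [Preorder L] [Finite L]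

lemma height_lt_top_of_finite (x : L) : Order.height x < ⊤ := by
  have := Fintype.ofFinite L
  refine (Order.height_le (n := Fintype.card L) fun p _ => ?_).trans_lt (ENat.natCast_lt_top _)
  exact_mod_cast p.length_lt_card.le

lemma natCast_ht (x : L) : (ht x : ℕ∞) = Order.height x :=
  ENat.natCast_toNat (height_lt_top_of_finite x).ne

lemma ht_strictMono : StrictMono (ht : L → ℕ) := fun a b hab => by
  have := Order.height_strictMono hab (height_lt_top_of_finite a)
  rwa [← natCast_ht, ← natCast_ht, Nat.cast_lt] at this

lemma ht_mono : Monotone (ht : L → ℕ) := fun a b hab => by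
  have := Order.height_mono hab
  rwa [← natCast_ht, ← natCast_ht, Nat.cast_le] at this

lemma exists_covBy_ht_add_one {b : L} (hb : 0 < ht b) : ∃ x, x ⋖ b ∧ ht x + 1 = ht b := by
  have hlt : ((ht b - 1 : ℕ) : ℕ∞) < Order.height b := by
    rw [← natCast_ht, Nat.cast_lt]; omega
  obtain ⟨x, hxb, hx⟩ := (Order.coe_lt_height_iff (height_lt_top_of_finite b)).mp hlt
  rw [← natCast_ht, Nat.cast_inj] at hx
  refine ⟨x, ⟨hxb, fun y hxy hyb => ?_⟩, by omega⟩
  have := ht_strictMono hxy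
  have := ht_strictMono hyb
  omega

end Height

lemma dLat_pos {L : Type*} [Lattice L] [Finite L] {u v : L} (h : u ≠ v) : 0 < dLat u v := by
  have := ht_strictMono (inf_lt_sup.mpr h)
  unfold dLat
  omega

section Modular

variable {L : Type*} [Lattice L] [IsModularLattice L] [Finite L]

lemma CovBy.ht_eq_add_one {a b : L} (h : a ⋖ b) : ht b = ht a + 1 := by
  induction b using WellFoundedLT.induction generalizing a with
  | _ b ih =>
  obtain ⟨x, hxb, hx⟩ := exists_covBy_ht_add_one (b := b) ((Nat.zero_le _).trans_lt
    (ht_strictMono h.lt))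
  by_cases hax : a = x
  · rw [hax, hx]
  -- two distinct lower covers of `b` meet in a common lower cover of both
  have hsup : a ⊔ x = b := h.wcovBy.sup_eq hxb.wcovBy hax
  have hxa : a ⊓ x ⋖ x := inf_covBy_of_covBy_sup_left (hsup ▸ h)
  have hax' : a ⊓ x ⋖ a := inf_covBy_of_covBy_sup_right (hsup ▸ hxb)
  have := ih x hxb.lt hxa
  have := ht_strictMono hax'.lt
  have := ht_strictMono h.lt
  omega

lemma ht_sup_add_ht_inf (a b : L) : ht (a ⊔ b) + ht (a ⊓ b) = ht a + ht b := by
  induction a using WellFoundedLT.induction with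
  | _ a ih =>
  rcases (inf_le_left : a ⊓ b ≤ a).eq_or_lt with hab | hab
  · rw [sup_eq_right.mpr (inf_eq_left.mp hab), hab, add_comm]
  obtain ⟨y, hy, hya⟩ := exists_le_covBy_of_lt hab
  have hyb : y ⊓ b = a ⊓ b := le_antisymm (inf_le_inf_right b hya.le) (le_inf hy inf_le_right)
  have hay : a ⊓ (y ⊔ b) = y := by
    rw [inf_comm, sup_inf_assoc_of_le b hya.le, sup_eq_left, inf_comm]
    exact hy
  have hsup : y ⊔ b ⋖ a ⊔ b := by
    have := covBy_sup_of_inf_covBy_left (hay ▸ hya)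
    rwa [← sup_assoc, sup_eq_left.mpr hya.le] at this
  have := ih y hya.lt
  rw [hyb] at this
  rw [hsup.ht_eq_add_one, hya.ht_eq_add_one]
  omega

lemma dLat_triangle (u w v : L) : dLat u v ≤ dLat u w + dLat w v := by
  have hsup := ht_sup_add_ht_inf (u ⊔ w) (w ⊔ v)
  have hinf := ht_sup_add_ht_inf (u ⊓ w) (w ⊓ v)
  have e1 : ht (u ⊔ v) ≤ ht ((u ⊔ w) ⊔ (w ⊔ v)) :=
    ht_mono (sup_le (le_sup_left.trans le_sup_left) (le_sup_right.trans le_sup_right))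
  have e2 : ht w ≤ ht ((u ⊔ w) ⊓ (w ⊔ v)) := ht_mono (le_inf le_sup_right le_sup_left)
  have e3 : ht ((u ⊓ w) ⊔ (w ⊓ v)) ≤ ht w := ht_mono (sup_le inf_le_right inf_le_left)
  have e4 : ht ((u ⊓ w) ⊓ (w ⊓ v)) ≤ ht (u ⊓ v) :=
    ht_mono (le_inf (inf_le_left.trans inf_le_left) (inf_le_right.trans inf_le_right))
  have e5 : ht (u ⊓ v) ≤ ht (u ⊔ v) := ht_mono inf_le_sup
  have e6 : ht (u ⊓ w) ≤ ht (u ⊔ w) := ht_mono inf_le_sup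
  have e7 : ht (w ⊓ v) ≤ ht (w ⊔ v) := ht_mono inf_le_sup
  unfold dLat
  omega

lemma disjoint_sph_of_lt_dLat {u v : L} {r : ℕ} (h : 2 * r < dLat u v) :
    Disjoint (sph u r) (sph v r) :=
  Set.disjoint_left.mpr fun x (hu : dLat u x ≤ r) (hv : dLat v x ≤ r) => by
    have := dLat_triangle u x v
    rw [dLat_comm x v] at this
    omega

end Modular

lemma sphT_subset_sph {L : Type*} [Lattice L] [BoundedOrder L] (u : L) (r : ℕ)
    (μ : Multiset ℕ) : sphT u r μ ⊆ sph u r :=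
  fun _ hv => hv.1

theorem stmt14_general {L : Type*} [Lattice L] [IsModularLattice L] [BoundedOrder L] [Fintype L]
    (μ φ : Multiset ℕ)
    (D : ℕ) (C : Set L) (hC : C ⊆ {v : L | IsTypeOf v μ})
    (hmin : ∀ u ∈ C, ∀ v ∈ C, u ≠ v → D ≤ dLat u v)
    (r : ℕ) (hr : r = (D - 1) / 2)
    (m : ℕ) (hm : m = sInf {k : ℕ | ∃ u : L, IsTypeOf u μ ∧ k = (sphT u r φ).ncard})
    (hmpos : 0 < m) :
    (C.ncard : ℝ) ≤ ({v : L | IsTypeOf v φ}.ncard : ℝ) / (m : ℝ) := by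
  have hdisj : C.PairwiseDisjoint fun u => sphT u r φ := fun u hu v hv huv => by
    have := hmin u hu v hv huv
    -- `dLat_pos` takes care of `D = 0`, where `2 * r < D` fails
    have := dLat_pos huv
    exact (disjoint_sph_of_lt_dLat (by omega)).mono (sphT_subset_sph u r φ)
      (sphT_subset_sph v r φ)
  have hsize : ∀ u ∈ C, m ≤ (sphT u r φ).ncard := fun u hu =>
    hm ▸ Nat.sInf_le ⟨u, hC hu, rfl⟩
  obtain ⟨C, rfl⟩ := C.toFinite.exists_finset_coe
  have hcount := Finset.card_mul_le_ncard_of_pairwiseDisjoint hdisj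
    (fun u _ v hv => hv.2) (by simpa using hsize)
  rw [Set.ncard_coe_finset, le_div_iff₀ (by exact_mod_cast hmpos)]
  exact_mod_cast hcount

/-- Sphere packing bound in a finite semi-primary lattice: for a
constant type code `C ⊆ L_μ` with minimum distance at least `D` and `r := ⌊(D−1)/2⌋`,
if `φ` is a partition with `min_{u ∈ L_μ} |S(u,r,φ)| > 0`, then
`|C| ≤ |L_φ| / min_{u ∈ L_μ} |S(u,r,φ)|`. -/
theorem stmt14 {L : Type*} [Lattice L] [IsModularLattice L] [BoundedOrder L] [Fintype L]
    (hsp : IsSemiPrimary L)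
    (μ φ : Multiset ℕ) (hμ : IsPartition μ) (hφ : IsPartition φ)
    (D : ℕ) (C : Set L) (hC : C ⊆ {v : L | IsTypeOf v μ})
    (hmin : ∀ u ∈ C, ∀ v ∈ C, u ≠ v → D ≤ dLat u v)
    (r : ℕ) (hr : r = (D - 1) / 2)
    (m : ℕ) (hm : m = sInf {k : ℕ | ∃ u : L, IsTypeOf u μ ∧ k = (sphT u r φ).ncard})
    (hmpos : 0 < m) :
    (C.ncard : ℝ) ≤ ({v : L | IsTypeOf v φ}.ncard : ℝ) / (m : ℝ) :=
  stmt14_general μ φ D C hC hmin r hr m hm hmpos
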